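/- arXiv:0708.3357 — 2 statements merged into one kernel-verified Lean document; each statement's English description precedes it below -/
import Mathlib

section
/- For every equivariant pair (ρ,τ) there exists a C^∞ function φ : ℂ → ℝ with φ(0) = 0 such that ∂φ/∂z̄(z) = −i(S(z) − Bz) for all z ∈ ℂ, where B denotes the constant value of B(z); consequently, for every C^∞ f : ℂ → ℂ one has (Af)(z) = e^{−B|z|²−iφ(z)}·(∂/∂z̄)[w ↦ e^{B|w|²+iφ(w)}f(w)](z), where (Af)(z) = (∂f/∂z̄)(z) + S(z)f(z). -/
noncomputable section

open Complex

/-- The group `G = 𝕋 ⋉ ℂ`, with elements `[a,b]`, acting on `ℂ` by `z ↦ a z + b`. -/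
@[ext]
structure GT : Type where
  a : Circle
  b : ℂ

namespace GT

instance : Group GT where
  mul g h := ⟨g.a * h.a, (g.a : ℂ) * h.b + g.b⟩
  one := ⟨1, 0⟩
  inv g := ⟨g.a⁻¹, -((g.a⁻¹ : ℂ) * g.b)⟩
  mul_assoc g h k := by
    refine GT.ext (mul_assoc _ _ _) ?_
    show ((g.a * h.a : Circle) : ℂ) * k.b + ((g.a : ℂ) * h.b + g.b)
        = (g.a : ℂ) * ((h.a : ℂ) * k.b + h.b) + g.b
    push_cast; ring
  one_mul g := by
    refine GT.ext (one_mul _) ?_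
    show ((1 : Circle) : ℂ) * g.b + 0 = g.b
    simp
  mul_one g := by
    refine GT.ext (mul_one _) ?_
    show (g.a : ℂ) * 0 + g.b = g.b
    simp
  inv_mul_cancel g := by
    refine GT.ext (inv_mul_cancel _) ?_
    show ((g.a⁻¹ : Circle) : ℂ) * g.b + -(((g.a : ℂ))⁻¹ * g.b) = 0
    push_cast; ring

/-- The action of `G` on `ℂ` : `[a,b]·z = a z + b`. -/
def act (g : GT) (z : ℂ) : ℂ := (g.a : ℂ) * z + g.b

end GT

/-- The Hermitian product `⟨z,w⟩ = z·conj w`. -/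
def herm (z w : ℂ) : ℂ := z * (starRingEnd ℂ) w

/-- The automorphic factor `j^α(g,z) = exp(2 i α Im⟨z, g⁻¹·0⟩)`. -/
def jfac (α : ℝ) (g : GT) (z : ℂ) : ℂ :=
  Complex.exp (2 * Complex.I * (α : ℂ) * ((herm z (GT.act g⁻¹ 0)).im : ℂ))

/-- The Wirtinger derivative `∂f/∂z = (1/2)(∂f/∂x − i ∂f/∂y)`. -/
def wderiv (f : ℂ → ℂ) (z : ℂ) : ℂ :=
  (1 / 2 : ℂ) * (fderiv ℝ f z 1 - Complex.I * fderiv ℝ f z Complex.I)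

/-- The anti-Wirtinger derivative `∂f/∂z̄ = (1/2)(∂f/∂x + i ∂f/∂y)`. -/
def wderivBar (f : ℂ → ℂ) (z : ℂ) : ℂ :=
  (1 / 2 : ℂ) * (fderiv ℝ f z 1 + Complex.I * fderiv ℝ f z Complex.I)

/-- The Euclidean Laplacian `Δ = 4 ∂²/∂z∂z̄`. -/
def lap (f : ℂ → ℂ) (z : ℂ) : ℂ := 4 * wderiv (fun w => wderivBar f w) z

/-- `S(z) = ν z + μ (τ(z)·∂τ̄/∂z̄(z) − τ̄(z)·∂τ/∂z̄(z))`. -/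
def Sfun (ν μ : ℝ) (τ : ℂ → ℂ) (z : ℂ) : ℂ :=
  (ν : ℂ) * z + (μ : ℂ) *
    (τ z * wderivBar (fun w => (starRingEnd ℂ) (τ w)) z - (starRingEnd ℂ) (τ z) * wderivBar τ z)

/-- `B(z) = ν + μ(|∂τ/∂z(z)|² − |∂τ/∂z̄(z)|²)`. -/
def Bfun (ν μ : ℝ) (τ : ℂ → ℂ) (z : ℂ) : ℝ :=
  ν + μ * (‖wderiv τ z‖ ^ 2 - ‖wderivBar τ z‖ ^ 2)

/-- The magnetic Schrödinger operator `L`. -/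
def Lop (ν μ : ℝ) (τ : ℂ → ℂ) (f : ℂ → ℂ) (z : ℂ) : ℂ :=
  - wderiv (fun w => wderivBar f w) z
    - (Sfun ν μ τ z * wderiv f z - (starRingEnd ℂ) (Sfun ν μ τ z) * wderivBar f z)
    + ((‖Sfun ν μ τ z‖ : ℂ)) ^ 2 * f z
    - ((μ : ℂ) / 4) *
        (τ z * lap (fun w => (starRingEnd ℂ) (τ w)) z - (starRingEnd ℂ) (τ z) * lap τ z) * f z

/-- The annihilation operator `A f = ∂f/∂z̄ + S f`. -/
def Aop (ν μ : ℝ) (τ : ℂ → ℂ) (f : ℂ → ℂ) (z : ℂ) : ℂ :=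
  wderivBar f z + Sfun ν μ τ z * f z

/-- The creation operator `Ã f = −∂f/∂z + conj(S) f`. -/
def Atop (ν μ : ℝ) (τ : ℂ → ℂ) (f : ℂ → ℂ) (z : ℂ) : ℂ :=
  - wderiv f z + (starRingEnd ℂ) (Sfun ν μ τ z) * f z

/-- `J(g,z) = j^ν(g,z)·j^μ(ρ(g),τ(z))`. -/
def Jfun (ν μ : ℝ) (ρ : GT → GT) (τ : ℂ → ℂ) (g : GT) (z : ℂ) : ℂ :=
  jfac ν g z * jfac μ (ρ g) (τ z)

/-- `φ_ρ(g,g') = Im(ν⟨g⁻¹·0,g'·0⟩ + μ⟨ρ(g⁻¹)·0, ρ(g')·0⟩)`. -/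
def phiRho (ν μ : ℝ) (ρ : GT → GT) (g g' : GT) : ℝ :=
  ((ν : ℂ) * herm (GT.act g⁻¹ 0) (GT.act g' 0)
    + (μ : ℂ) * herm (GT.act (ρ g⁻¹) 0) (GT.act (ρ g') 0)).im

/-- Membership in the lattice `Γ = ℤω₁ + ℤω₂`. -/
def inLattice (ω₁ ω₂ : ℂ) (γ : ℂ) : Prop := ∃ m n : ℤ, γ = (m : ℂ) * ω₁ + (n : ℂ) * ω₂

/-- Mixed `Γ`-automorphic form of type `(ν,μ)` w.r.t. the pair `(ρ,τ)`. -/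
def MixedForm (ν μ : ℝ) (ρ : GT → GT) (τ : ℂ → ℂ) (ω₁ ω₂ : ℂ) (F : ℂ → ℂ) : Prop :=
  ContDiff ℝ (⊤ : ℕ∞) F ∧ ∀ γ : ℂ, inLattice ω₁ ω₂ γ → ∀ z : ℂ,
    F (z + γ) = jfac (-ν) ⟨(1 : Circle), γ⟩ z * jfac (-μ) (ρ ⟨(1 : Circle), γ⟩) (τ z) * F z

/-- The Laguerre polynomial `L_k`. -/
def laguerre (k : ℕ) (x : ℝ) : ℝ :=
  ∑ j ∈ Finset.range (k + 1), (-1) ^ j * (k.choose j : ℝ) * x ^ j / (Nat.factorial j : ℝ)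


/-- The multiplier `χ_τ(γ) = exp(iφ(γ) − 2iμ Im⟨τ(0), ρ([1,γ])⁻¹·0⟩)`. -/
def chiTau (μ : ℝ) (ρ : GT → GT) (τ : ℂ → ℂ) (φ : ℂ → ℝ) (γ : ℂ) : ℂ :=
  Complex.exp (Complex.I * (φ γ : ℂ)
    - 2 * Complex.I * (μ : ℂ) * ((herm (τ 0) (GT.act (ρ ⟨1, γ⟩)⁻¹ 0)).im : ℂ))

/-- The eigenprojector kernel `K_k`. -/
def Kker (B : ℝ) (φ : ℂ → ℝ) (k : ℕ) (z w : ℂ) : ℂ :=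
  ((2 * B / Real.pi : ℝ) : ℂ) * Complex.exp (-Complex.I * ((φ z - φ w : ℝ) : ℂ)) *
    Complex.exp (2 * Complex.I * (B : ℂ) * ((herm z w).im : ℂ)) *
    Complex.exp (-((B * ‖z - w‖ ^ 2 : ℝ) : ℂ)) *
    ((laguerre k (2 * B * ‖z - w‖ ^ 2) : ℝ) : ℂ)

/-- The kernel `K^σ_ξ;k`. -/
def Kxi (σ : ℝ) (ξ : ℂ) (k : ℕ) (z w : ℂ) : ℂ :=
  ((2 * σ / Real.pi : ℝ) : ℂ) * Complex.exp (2 * Complex.I * ((herm (z - w) ξ).im : ℂ)) *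
    Complex.exp (2 * Complex.I * (σ : ℂ) * ((herm z w).im : ℂ)) *
    Complex.exp (-((σ * ‖z - w‖ ^ 2 : ℝ) : ℂ)) *
    ((laguerre k (2 * σ * ‖z - w‖ ^ 2) : ℝ) : ℂ)

/-- `m`-fold iterate of the creation operator `Ã`. -/
def AtopIter (ν μ : ℝ) (τ : ℂ → ℂ) (m : ℕ) (f : ℂ → ℂ) : ℂ → ℂ :=
  (fun u z => Atop ν μ τ u z)^[m] f

/-! Equivariance under translations, together with the fact that every homomorphism from `G` to
an abelian group is trivial on translations, shows that `τ (z + b) - τ z` does not depend on `z`;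
being continuous, `τ` is real-affine, `τ z = c + p z + q z̄`. Then `S z = B z + s` for a constant
`s`, so `φ z = 2 Re (-i s z̄)` solves `∂φ/∂z̄ = -i (S - B z)`, and the conjugation formula for `A`
is the product rule for `∂/∂z̄` applied to `exp (B |w|² + i φ w) f w`. -/

open ComplexConjugate

namespace GT

def translation (b : ℂ) : GT := ⟨1, b⟩

def rotation : GT →* Circle where
  toFun g := g.a
  map_one' := rfl
  map_mul' _ _ := rfl

lemma translation_add (b c : ℂ) : translation (b + c) = translation b * translation c :=
  GT.ext (mul_one 1).symm (by show b + c = ((1 : Circle) : ℂ) * c + b; simp [add_comm])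

lemma translation_zero : translation 0 = 1 := rfl

lemma rotation_neg_one_conj_translation (b : ℂ) :
    (⟨-1, 0⟩ : GT) * translation b * (⟨-1, 0⟩ : GT)⁻¹ = translation (-b) := by
  refine GT.ext (show (-1 * 1 * (-1)⁻¹ : Circle) = 1 by simp) ?_
  show ((-1 * 1 : Circle) : ℂ) * -(((-1 : Circle)⁻¹ : Circle) * (0 : ℂ)) + ((-1 : Circle) * b + 0)
    = -b
  simp

/-- Conjugation by the half-turn inverts translations, so in a commutative target
`χ (translation b) = χ (translation (-b)) = (χ (translation b))⁻¹`; applied to `b / 2` this gives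
`χ (translation b) = χ (translation (b / 2)) ^ 2 = 1`. -/
lemma map_translation_eq_one {A : Type*} [CommGroup A] (χ : GT →* A) (b : ℂ) :
    χ (translation b) = 1 := by
  have hsq : ∀ c, χ (translation c) * χ (translation c) = 1 := fun c => by
    have hinv : χ (translation (-c)) = χ (translation c) := by
      rw [← rotation_neg_one_conj_translation, map_mul, map_mul, map_inv, mul_inv_cancel_comm]
    calc χ (translation c) * χ (translation c)
        = χ (translation (c + -c)) := by rw [translation_add, map_mul, hinv]
      _ = 1 := by rw [add_neg_cancel, translation_zero, map_one]
  calc χ (translation b) = χ (translation (b / 2)) * χ (translation (b / 2)) := by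
        rw [← map_mul, ← translation_add, add_halves]
    _ = 1 := hsq _

lemma act_translation (b z : ℂ) : act (translation b) z = z + b := by
  simp [act, translation]

end GT

lemma map_add_of_equivariant (ρ : GT →* GT) {τ : ℂ → ℂ}
    (hequiv : ∀ (g : GT) (z : ℂ), τ (GT.act g z) = GT.act (ρ g) (τ z)) (z b : ℂ) :
    τ (z + b) = τ z + (τ b - τ 0) := by
  have hrot : ((ρ (GT.translation b)).a : ℂ) = 1 :=
    congrArg ((↑) : Circle → ℂ) (GT.map_translation_eq_one (GT.rotation.comp ρ) b)
  have hshift : ∀ w, τ (w + b) = τ w + (ρ (GT.translation b)).b := fun w => by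
    rw [← GT.act_translation, hequiv, GT.act, hrot, one_mul]
  rw [hshift, ← zero_add b, hshift, zero_add]
  ring

lemma exists_eq_affine_of_map_add {τ : ℂ → ℂ} (hτ : Continuous τ)
    (hadd : ∀ z b, τ (z + b) = τ z + (τ b - τ 0)) :
    ∃ p q : ℂ, τ = fun w => τ 0 + p * w + q * conj w := by
  let A : ℂ →+ ℂ :=
    { toFun := fun w => τ w - τ 0
      map_zero' := sub_self _
      map_add' := fun z b => by simp only [hadd]; ring }
  have hA : Continuous A := hτ.sub continuous_const
  have hlin : ∀ w : ℂ, A w = w.re • A 1 + w.im • A I := fun w => by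
    have hw : w = w.re • (1 : ℂ) + w.im • I := by simp [real_smul, re_add_im]
    conv_lhs => rw [hw]
    rw [map_add, map_real_smul A hA, map_real_smul A hA]
  refine ⟨(A 1 - I * A I) / 2, (A 1 + I * A I) / 2, funext fun w => ?_⟩
  have hτw : τ w = τ 0 + A w := by simp [A]
  have hconj : conj w = w.re - w.im * I := by apply Complex.ext <;> simp
  rw [hτw, hlin w, hconj, real_smul, real_smul]
  linear_combination (A 1 / 2 - I * A I / 2) * (re_add_im w) + (w.im * A I) * I_sq

lemma exists_eq_affine_of_equivariant (ρ : GT →* GT) {τ : ℂ → ℂ} (hτ : Continuous τ)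
    (hequiv : ∀ (g : GT) (z : ℂ), τ (GT.act g z) = GT.act (ρ g) (τ z)) :
    ∃ c p q : ℂ, τ = fun w => c + p * w + q * conj w :=
  let ⟨p, q, h⟩ := exists_eq_affine_of_map_add hτ (map_add_of_equivariant ρ hequiv)
  ⟨τ 0, p, q, h⟩

section Wirtinger

variable {f g : ℂ → ℂ} {z : ℂ}

lemma HasFDerivAt.wderiv_eq {L : ℂ →L[ℝ] ℂ} (h : HasFDerivAt f L z) :
    wderiv f z = (1 / 2) * (L 1 - I * L I) := by
  rw [wderiv, h.fderiv]

lemma HasFDerivAt.wderivBar_eq {L : ℂ →L[ℝ] ℂ} (h : HasFDerivAt f L z) :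
    wderivBar f z = (1 / 2) * (L 1 + I * L I) := by
  rw [wderivBar, h.fderiv]

lemma wderivBar_add (hf : DifferentiableAt ℝ f z) (hg : DifferentiableAt ℝ g z) :
    wderivBar (fun w => f w + g w) z = wderivBar f z + wderivBar g z := by
  rw [(hf.hasFDerivAt.fun_add hg.hasFDerivAt).wderivBar_eq, wderivBar, wderivBar]
  simp only [add_apply]
  ring

lemma wderivBar_mul (hf : DifferentiableAt ℝ f z) (hg : DifferentiableAt ℝ g z) :
    wderivBar (fun w => f w * g w) z = wderivBar f z * g z + f z * wderivBar g z := by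
  rw [(hf.hasFDerivAt.fun_mul hg.hasFDerivAt).wderivBar_eq, wderivBar, wderivBar]
  simp only [add_apply, smul_apply, smul_eq_mul]
  ring

lemma wderivBar_const_mul (c : ℂ) (hf : DifferentiableAt ℝ f z) :
    wderivBar (fun w => c * f w) z = c * wderivBar f z := by
  rw [(hf.hasFDerivAt.const_mul c).wderivBar_eq, wderivBar]
  simp only [smul_apply, smul_eq_mul]
  ring

lemma wderivBar_cexp (hf : DifferentiableAt ℝ f z) :
    wderivBar (fun w => exp (f w)) z = exp (f z) * wderivBar f z := by
  rw [hf.hasFDerivAt.cexp.wderivBar_eq, wderivBar]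
  simp only [smul_apply, smul_eq_mul]
  ring

lemma cexp_neg_mul_wderivBar_cexp_mul (hf : DifferentiableAt ℝ f z)
    (hg : DifferentiableAt ℝ g z) :
    exp (-f z) * wderivBar (fun w => exp (f w) * g w) z
      = wderivBar g z + wderivBar f z * g z := by
  have hinv : exp (-f z) * exp (f z) = 1 := by rw [← exp_add, neg_add_cancel, exp_zero]
  rw [wderivBar_mul hf.cexp hg, wderivBar_cexp hf]
  linear_combination (wderivBar f z * g z + wderivBar g z) * hinv

lemma hasFDerivAt_affine (c p q z : ℂ) :
    HasFDerivAt (fun w => c + p * w + q * conj w)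
      (p • ContinuousLinearMap.id ℝ ℂ + q • conjCLE.toContinuousLinearMap) z :=
  (((hasFDerivAt_id z).const_mul p).const_add c).add (conjCLE.hasFDerivAt.const_mul q)

lemma wderiv_affine (c p q z : ℂ) : wderiv (fun w => c + p * w + q * conj w) z = p := by
  rw [(hasFDerivAt_affine c p q z).wderiv_eq]
  simp only [one_div, add_apply, smul_apply, ContinuousLinearMap.id_apply, smul_eq_mul, mul_one,
    ContinuousLinearEquiv.coe_coe, ContinuousAlgEquiv.coeCLE_apply, conjCAE_apply, map_one, conj_I,
    mul_neg]
  linear_combination (q / 2 - p / 2) * I_sq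

lemma wderivBar_affine (c p q z : ℂ) : wderivBar (fun w => c + p * w + q * conj w) z = q := by
  rw [(hasFDerivAt_affine c p q z).wderivBar_eq]
  simp only [one_div, add_apply, smul_apply, ContinuousLinearMap.id_apply, smul_eq_mul, mul_one,
    ContinuousLinearEquiv.coe_coe, ContinuousAlgEquiv.coeCLE_apply, conjCAE_apply, map_one, conj_I,
    mul_neg]
  linear_combination (p / 2 - q / 2) * I_sq

lemma wderivBar_mul_conj (z : ℂ) : wderivBar (fun w => w * conj w) z = z := by
  rw [HasFDerivAt.wderivBar_eq (f := fun w => w * conj w)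
    ((hasFDerivAt_id (𝕜 := ℝ) z).fun_mul conjCLE.hasFDerivAt)]
  simp only [one_div, id_eq, add_apply, smul_apply, ContinuousLinearEquiv.coe_coe,
    ContinuousAlgEquiv.coeCLE_apply, conjCAE_apply, map_one, smul_eq_mul, mul_one,
    ContinuousLinearMap.id_apply, conj_I, mul_neg]
  linear_combination (conj z / 2 - z / 2) * I_sq

end Wirtinger

lemma wderivBar_ofReal_mul_sq_norm (B : ℝ) (z : ℂ) :
    wderivBar (fun w => ((B * ‖w‖ ^ 2 : ℝ) : ℂ)) z = B * z := by
  have h : (fun w : ℂ => ((B * ‖w‖ ^ 2 : ℝ) : ℂ)) = fun w => (B : ℂ) * (w * conj w) := by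
    funext w
    push_cast
    rw [mul_conj']
  rw [h, wderivBar_const_mul _ (by fun_prop), wderivBar_mul_conj]

lemma wderivBar_ofReal_two_mul_re_mul_conj (k z : ℂ) :
    wderivBar (fun w => ((2 * (k * conj w).re : ℝ) : ℂ)) z = k := by
  have h : (fun w : ℂ => ((2 * (k * conj w).re : ℝ) : ℂ))
      = fun w => 0 + conj k * w + k * conj w := by
    funext w
    rw [ofReal_mul, re_eq_add_conj]
    simp only [map_mul, conj_conj]
    push_cast
    ring
  rw [h, wderivBar_affine]

lemma cexp_neg_mul_wderivBar_gauge_mul {φ : ℂ → ℝ} {f : ℂ → ℂ} {B : ℝ} {s z : ℂ}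
    (hφ : DifferentiableAt ℝ φ z) (hf : DifferentiableAt ℝ f z)
    (hφs : wderivBar (fun w => (φ w : ℂ)) z = -I * (s - B * z)) :
    exp (-((B * ‖z‖ ^ 2 : ℝ) : ℂ) - I * φ z) *
        wderivBar (fun w => exp (((B * ‖w‖ ^ 2 : ℝ) : ℂ) + I * φ w) * f w) z
      = wderivBar f z + s * f z := by
  have hφ' : DifferentiableAt ℝ (fun w => (φ w : ℂ)) z :=
    differentiable_ofReal.differentiableAt.comp z hφ
  have hsq : DifferentiableAt ℝ (fun w : ℂ => ((B * ‖w‖ ^ 2 : ℝ) : ℂ)) z :=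
    differentiable_ofReal.differentiableAt.comp z
      ((differentiableAt_id.norm_sq ℂ).const_mul B)
  have hgauge : wderivBar (fun w => ((B * ‖w‖ ^ 2 : ℝ) : ℂ) + I * φ w) z = s := by
    rw [wderivBar_add hsq (hφ'.const_mul I), wderivBar_const_mul I hφ',
      wderivBar_ofReal_mul_sq_norm, hφs]
    linear_combination (B * z - s) * I_sq
  rw [← neg_add', cexp_neg_mul_wderivBar_cexp_mul (hsq.fun_add (hφ'.const_mul I)) hf, hgauge]

section Affine

variable (ν μ : ℝ) (c p q : ℂ)

lemma Bfun_affine (z : ℂ) :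
    Bfun ν μ (fun w => c + p * w + q * conj w) z = ν + μ * (‖p‖ ^ 2 - ‖q‖ ^ 2) := by
  rw [Bfun, wderiv_affine, wderivBar_affine]

lemma Sfun_affine (z : ℂ) :
    Sfun ν μ (fun w => c + p * w + q * conj w) z
      = Bfun ν μ (fun w => c + p * w + q * conj w) z * z + μ * (c * conj p - conj c * q) := by
  have hconj : (fun w => conj (c + p * w + q * conj w))
      = fun w => conj c + conj q * w + conj p * conj w := by
    funext w
    simp only [map_add, map_mul, conj_conj]
    ring
  simp only [Sfun, hconj, wderivBar_affine, Bfun_affine]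
  push_cast
  rw [← mul_conj', ← mul_conj']
  simp only [map_add, map_mul, conj_conj]
  ring

end Affine

theorem statement2_general (ν μ : ℝ)
    (ρ : GT →* GT) (τ : ℂ → ℂ) (hτ : ContDiff ℝ (⊤ : ℕ∞) τ)
    (hequiv : ∀ (g : GT) (z : ℂ), τ (GT.act g z) = GT.act (ρ g) (τ z))
    (B : ℝ) (hB : ∀ z : ℂ, Bfun ν μ τ z = B) :
    ∃ φ : ℂ → ℝ, ContDiff ℝ (⊤ : ℕ∞) φ ∧ φ 0 = 0 ∧
      (∀ z : ℂ, wderivBar (fun w => (φ w : ℂ)) z = -Complex.I * (Sfun ν μ τ z - (B : ℂ) * z)) ∧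
      (∀ f : ℂ → ℂ, ContDiff ℝ (⊤ : ℕ∞) f → ∀ z : ℂ,
        Aop ν μ τ f z =
          Complex.exp (-((B * ‖z‖ ^ 2 : ℝ) : ℂ) - Complex.I * (φ z : ℂ)) *
            wderivBar (fun w =>
              Complex.exp (((B * ‖w‖ ^ 2 : ℝ) : ℂ) + Complex.I * (φ w : ℂ)) * f w) z) := by
  obtain ⟨c, p, q, rfl⟩ := exists_eq_affine_of_equivariant ρ hτ.continuous hequiv
  set s := (μ : ℂ) * (c * conj p - conj c * q)
  have hS : ∀ z, Sfun ν μ (fun w => c + p * w + q * conj w) z = B * z + s := fun z => by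
    rw [Sfun_affine, hB]
  set φ : ℂ → ℝ := fun w => 2 * (-I * s * conj w).re
  have hφ : ContDiff ℝ (⊤ : ℕ∞) φ :=
    contDiff_const.mul (reCLM.contDiff.comp (contDiff_const.mul conjCLE.contDiff))
  have hφs : ∀ z, wderivBar (fun w => (φ w : ℂ)) z = -I * (Sfun ν μ _ z - B * z) := fun z => by
    rw [wderivBar_ofReal_two_mul_re_mul_conj, hS]
    ring
  refine ⟨φ, hφ, by simp [φ], hφs, fun f hf z => ?_⟩
  rw [cexp_neg_mul_wderivBar_gauge_mul (hφ.differentiable (by simp) z)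
    (hf.differentiable (by simp) z) (hφs z), Aop]

theorem statement2 (ν μ : ℝ) (hν : 0 < ν) (hμ : 0 < μ)
    (ρ : GT →* GT) (τ : ℂ → ℂ) (hτ : ContDiff ℝ (⊤ : ℕ∞) τ)
    (hequiv : ∀ (g : GT) (z : ℂ), τ (GT.act g z) = GT.act (ρ g) (τ z))
    (B : ℝ) (hB : ∀ z : ℂ, Bfun ν μ τ z = B) :
    ∃ φ : ℂ → ℝ, ContDiff ℝ (⊤ : ℕ∞) φ ∧ φ 0 = 0 ∧
      (∀ z : ℂ, wderivBar (fun w => (φ w : ℂ)) z = -Complex.I * (Sfun ν μ τ z - (B : ℂ) * z)) ∧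
      (∀ f : ℂ → ℂ, ContDiff ℝ (⊤ : ℕ∞) f → ∀ z : ℂ,
        Aop ν μ τ f z =
          Complex.exp (-((B * ‖z‖ ^ 2 : ℝ) : ℂ) - Complex.I * (φ z : ℂ)) *
            wderivBar (fun w =>
              Complex.exp (((B * ‖w‖ ^ 2 : ℝ) : ℂ) + Complex.I * (φ w : ℂ)) * f w) z) :=
  statement2_general ν μ ρ τ hτ hequiv B hB
end
end

section
/- A C^∞ function F : ℂ → ℂ belongs to M^{ν,μ}_τ(ℂ) if and only if the function G(z) = e^{iφ(z)}·F(z) satisfies G(z+γ) = χ_τ(γ)·j^{−B}([1,γ], z)·G(z) for all γ ∈ Γ and z ∈ ℂ, where χ_τ(γ) = exp(iφ(γ) − 2iμ·Im⟨τ(0), ρ([1,γ])⁻¹·0⟩); in other words, the image of M^{ν,μ}_τ(ℂ) under the transformation W f = e^{iφ}f is exactly the space of Landau (Γ,χ_τ)-automorphic functions of magnitude B. -/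
noncomputable section

open Complex

/-!
Multiplying by `e^{iφ}` turns the factor `j^{-ν}([1,γ],z) j^{-μ}(ρ[1,γ],τ z)` into
`χ_τ(γ) j^{-B}([1,γ],z)`. On phases this is the identity
`φ(z+γ) - φ(z) - 2(B-ν) Im⟨z,γ⟩ - 2μ Im⟨τ z, e⟩ = φ(γ) - φ(0) - 2μ Im⟨τ 0, e⟩`, `e = ρ([1,γ])⁻¹·0`,
i.e. the real function on the left is constant. Its `∂/∂z̄` vanishes: by equivariance
`τ(z+γ) = a τ(z) + b` with `|a| = 1`, so `∂τ` and `∂τ/∂z̄` pick up the factor `a` under translation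
and `S(z+γ) - S(z) = νγ + μ(ē ∂τ/∂z̄ - e conj(∂τ/∂z))`, which cancels the remaining terms.
A real-valued function with vanishing `∂/∂z̄` has vanishing derivative.
-/

open ComplexConjugate

namespace GT

@[simp] lemma act_one_mk (γ w : ℂ) : act ⟨1, γ⟩ w = w + γ := by
  simp [act, add_comm]

lemma act_inv_zero (g : GT) : act g⁻¹ 0 = -(conj (g.a : ℂ) * g.b) := by
  show ((g.a⁻¹ : Circle) : ℂ) * 0 + -(((g.a⁻¹ : Circle) : ℂ) * g.b) = _
  rw [Circle.coe_inv_eq_conj, mul_zero, zero_add]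

end GT

lemma jfac_translation (α : ℝ) (γ z : ℂ) :
    jfac α ⟨1, γ⟩ z = exp (-(2 * I * α * (z * conj γ).im)) := by
  rw [jfac, herm, GT.act_inv_zero]
  simp only [Circle.coe_one, map_one, one_mul, map_neg, mul_neg, neg_im]
  push_cast
  ring_nf

section Wirtinger

variable {f g : ℂ → ℂ} {z : ℂ}

lemma wderivBar_sub (hf : DifferentiableAt ℝ f z) (hg : DifferentiableAt ℝ g z) :
    wderivBar (fun w => f w - g w) z = wderivBar f z - wderivBar g z := by
  simp only [wderivBar, fderiv_fun_sub hf hg, sub_apply]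
  ring

lemma wderivBar_mul_const (c : ℂ) (hf : DifferentiableAt ℝ f z) :
    wderivBar (fun w => f w * c) z = wderivBar f z * c := by
  simpa only [mul_comm _ c] using wderivBar_const_mul c hf

lemma wderiv_mul_const (c : ℂ) (hf : DifferentiableAt ℝ f z) :
    wderiv (fun w => f w * c) z = wderiv f z * c := by
  simp only [wderiv, fderiv_mul_const hf c, smul_apply, smul_eq_mul]
  ring

@[simp] lemma wderiv_id : wderiv (fun w => w) z = 1 := by
  simp [wderiv]
  ring_nf

@[simp] lemma wderivBar_id : wderivBar (fun w => w) z = 0 := by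
  simp [wderivBar]

lemma wderivBar_comp_add_right (f : ℂ → ℂ) (γ z : ℂ) :
    wderivBar (fun w => f (w + γ)) z = wderivBar f (z + γ) := by
  rw [wderivBar, wderivBar, fderiv_comp_add_right]

lemma wderivBar_conj_comp (f : ℂ → ℂ) (z : ℂ) :
    wderivBar (fun w => conj (f w)) z = conj (wderiv f z) := by
  have : fderiv ℝ (fun w => conj (f w)) z = conjCLE.toContinuousLinearMap.comp (fderiv ℝ f z) :=
    conjCLE.comp_fderiv
  simp [wderivBar, wderiv, this, Complex.conj_ofNat]

lemma wderivBar_ofReal_im (hf : DifferentiableAt ℝ f z) :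
    wderivBar (fun w => ((f w).im : ℂ)) z = (wderivBar f z - conj (wderiv f z)) / (2 * I) := by
  have : fderiv ℝ (fun w => ((f w).im : ℂ)) z = (ofRealCLM.comp imCLM).comp (fderiv ℝ f z) :=
    ((ofRealCLM.comp imCLM).hasFDerivAt.comp z hf.hasFDerivAt).fderiv
  simp only [wderivBar, wderiv, this, ContinuousLinearMap.comp_apply]
  rw [eq_div_iff (by simp)]
  apply Complex.ext <;> simp [Complex.conj_ofNat] <;> ring

lemma fderiv_eq_zero_of_wderivBar_ofReal_eq_zero {u : ℂ → ℝ} (hu : DifferentiableAt ℝ u z)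
    (h : wderivBar (fun w => (u w : ℂ)) z = 0) : fderiv ℝ u z = 0 := by
  have hcomp : fderiv ℝ (fun w => (u w : ℂ)) z = ofRealCLM.comp (fderiv ℝ u z) :=
    (ofRealCLM.hasFDerivAt.comp z hu.hasFDerivAt).fderiv
  rw [wderivBar, hcomp] at h
  have h1 : fderiv ℝ u z 1 = 0 := by simpa using congrArg (2 * re ·) h
  have hI : fderiv ℝ u z I = 0 := by simpa using congrArg (2 * im ·) h
  ext v
  rw [← re_add_im v, ← mul_one (v.re : ℂ), ← real_smul, ← real_smul, map_add, map_smul,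
    map_smul, h1, hI]
  simp

end Wirtinger

section AffineTranslation

variable {f : ℂ → ℂ} {z γ c d : ℂ}

lemma fderiv_add_of_affine (hf : DifferentiableAt ℝ f z) (h : ∀ w, f (w + γ) = c * f w + d) :
    fderiv ℝ f (z + γ) = c • fderiv ℝ f z := by
  rw [← fderiv_comp_add_right, funext h, fderiv_add_const, fderiv_const_mul hf]

lemma wderiv_add_of_affine (hf : DifferentiableAt ℝ f z) (h : ∀ w, f (w + γ) = c * f w + d) :
    wderiv f (z + γ) = c * wderiv f z := by
  simp only [wderiv, fderiv_add_of_affine hf h, smul_apply, smul_eq_mul]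
  ring

lemma wderivBar_add_of_affine (hf : DifferentiableAt ℝ f z) (h : ∀ w, f (w + γ) = c * f w + d) :
    wderivBar f (z + γ) = c * wderivBar f z := by
  simp only [wderivBar, fderiv_add_of_affine hf h, smul_apply, smul_eq_mul]
  ring

end AffineTranslation

lemma Sfun_add_of_equivariant {ν μ : ℝ} {τ : ℂ → ℂ} {z γ : ℂ} {g : GT}
    (hτ : DifferentiableAt ℝ τ z) (hg : ∀ w, τ (w + γ) = GT.act g (τ w)) :
    Sfun ν μ τ (z + γ) = Sfun ν μ τ z + ν * γ
      + μ * (conj (GT.act g⁻¹ 0) * wderivBar τ z - GT.act g⁻¹ 0 * conj (wderiv τ z)) := by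
  have hg' : ∀ w, τ (w + γ) = g.a * τ w + g.b := hg
  have hunit : (g.a : ℂ) * conj (g.a : ℂ) = 1 := by simp [mul_conj]
  simp only [Sfun, wderivBar_conj_comp, hg' z, wderiv_add_of_affine hτ hg',
    wderivBar_add_of_affine hτ hg', GT.act_inv_zero, map_add, map_mul, map_neg, conj_conj]
  linear_combination μ * (τ z * conj (wderiv τ z) - conj (τ z) * wderivBar τ z) * hunit
lemma gauge_cocycle {ν μ B : ℝ} {τ : ℂ → ℂ} {φ : ℂ → ℝ}
    (hτ : Differentiable ℝ τ) (hφd : Differentiable ℝ φ)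
    (hφ : ∀ z, wderivBar (fun w => (φ w : ℂ)) z = -I * (Sfun ν μ τ z - B * z))
    {γ : ℂ} {g : GT} (hg : ∀ w, τ (w + γ) = GT.act g (τ w)) (z : ℂ) :
    φ (z + γ) - φ z - 2 * (B - ν) * (z * conj γ).im - 2 * μ * (τ z * conj (GT.act g⁻¹ 0)).im
      = φ γ - φ 0 - 2 * μ * (τ 0 * conj (GT.act g⁻¹ 0)).im := by
  set Φ : ℂ → ℝ := fun w => φ (w + γ) - φ w - 2 * (B - ν) * (w * conj γ).im
    - 2 * μ * (τ w * conj (GT.act g⁻¹ 0)).im with hΦ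
  have hΦd : Differentiable ℝ Φ := by fun_prop
  have hΦbar (z : ℂ) : wderivBar (fun w => (Φ w : ℂ)) z = 0 := by
    simp only [hΦ, ofReal_sub, ofReal_mul, ofReal_ofNat]
    simp (disch := fun_prop) only [wderivBar_sub, wderivBar_const_mul,
      wderivBar_comp_add_right (fun w => (φ w : ℂ)), wderivBar_ofReal_im, wderivBar_mul_const,
      wderiv_mul_const, wderivBar_id, wderiv_id, hφ, Sfun_add_of_equivariant (hτ z) hg,
      map_mul, map_one, conj_conj]
    field_simp
    simp only [I_sq]
    ring
  have hconst := is_const_of_fderiv_eq_zero hΦd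
    fun z => fderiv_eq_zero_of_wderivBar_ofReal_eq_zero (hΦd z) (hΦbar z)
  simpa [hΦ] using hconst z 0

lemma exp_gauge_mul_jfac {ν μ B : ℝ} {ρ : GT → GT} {τ : ℂ → ℂ} {φ : ℂ → ℝ}
    (hτ : Differentiable ℝ τ) (hφd : Differentiable ℝ φ) (hφ0 : φ 0 = 0)
    (hφ : ∀ z, wderivBar (fun w => (φ w : ℂ)) z = -I * (Sfun ν μ τ z - B * z))
    {γ : ℂ} (hγ : ∀ w, τ (w + γ) = GT.act (ρ ⟨1, γ⟩) (τ w)) (z : ℂ) :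
    exp (I * φ (z + γ)) * (jfac (-ν) ⟨1, γ⟩ z * jfac (-μ) (ρ ⟨1, γ⟩) (τ z))
      = chiTau μ ρ τ φ γ * jfac (-B) ⟨1, γ⟩ z * exp (I * φ z) := by
  have hcocycle := congrArg ((↑) : ℝ → ℂ) (gauge_cocycle hτ hφd hφ hγ z)
  rw [hφ0] at hcocycle
  push_cast at hcocycle
  rw [jfac_translation, jfac_translation]
  simp only [jfac, chiTau, herm, ← exp_add]
  congr 1
  push_cast
  linear_combination I * hcocycle

theorem statement7_general (ν μ : ℝ)
    (ρ : GT →* GT) (τ : ℂ → ℂ) (hτ : ContDiff ℝ (⊤ : ℕ∞) τ)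
    (hequiv : ∀ (g : GT) (z : ℂ), τ (GT.act g z) = GT.act (ρ g) (τ z))
    (B : ℝ)
    (φ : ℂ → ℝ) (hφs : ContDiff ℝ (⊤ : ℕ∞) φ) (hφ0 : φ 0 = 0)
    (hφ : ∀ z : ℂ, wderivBar (fun w => (φ w : ℂ)) z = -Complex.I * (Sfun ν μ τ z - (B : ℂ) * z))
    (ω₁ ω₂ : ℂ)
    (F : ℂ → ℂ) (hF : ContDiff ℝ (⊤ : ℕ∞) F) :
    MixedForm ν μ (⇑ρ) τ ω₁ ω₂ F ↔
      (∀ γ : ℂ, inLattice ω₁ ω₂ γ → ∀ z : ℂ,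
        Complex.exp (Complex.I * (φ (z + γ) : ℂ)) * F (z + γ) =
          chiTau μ (⇑ρ) τ φ γ * jfac (-B) ⟨1, γ⟩ z *
            (Complex.exp (Complex.I * (φ z : ℂ)) * F z)) := by
  have hfactor (γ z : ℂ) := exp_gauge_mul_jfac (hτ.differentiable (by simp))
    (hφs.differentiable (by simp)) hφ0 hφ (fun w => by simpa using hequiv ⟨1, γ⟩ w) z
  constructor
  · rintro ⟨-, hFγ⟩ γ hγ z
    rw [hFγ γ hγ z]
    linear_combination F z * hfactor γ z
  · refine fun hG => ⟨hF, fun γ hγ z => mul_left_cancel₀ (exp_ne_zero (I * φ (z + γ))) ?_⟩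
    rw [hG γ hγ z]
    linear_combination -F z * hfactor γ z

theorem statement7 (ν μ : ℝ) (hν : 0 < ν) (hμ : 0 < μ)
    (ρ : GT →* GT) (τ : ℂ → ℂ) (hτ : ContDiff ℝ (⊤ : ℕ∞) τ)
    (hequiv : ∀ (g : GT) (z : ℂ), τ (GT.act g z) = GT.act (ρ g) (τ z))
    (B : ℝ) (hB : ∀ z : ℂ, Bfun ν μ τ z = B)
    (φ : ℂ → ℝ) (hφs : ContDiff ℝ (⊤ : ℕ∞) φ) (hφ0 : φ 0 = 0)
    (hφ : ∀ z : ℂ, wderivBar (fun w => (φ w : ℂ)) z = -Complex.I * (Sfun ν μ τ z - (B : ℂ) * z))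
    (ω₁ ω₂ : ℂ) (hω : LinearIndependent ℝ ![ω₁, ω₂])
    (F : ℂ → ℂ) (hF : ContDiff ℝ (⊤ : ℕ∞) F) :
    MixedForm ν μ (⇑ρ) τ ω₁ ω₂ F ↔
      (∀ γ : ℂ, inLattice ω₁ ω₂ γ → ∀ z : ℂ,
        Complex.exp (Complex.I * (φ (z + γ) : ℂ)) * F (z + γ) =
          chiTau μ (⇑ρ) τ φ γ * jfac (-B) ⟨1, γ⟩ z *
            (Complex.exp (Complex.I * (φ z : ℂ)) * F z)) :=
  statement7_general ν μ ρ τ hτ hequiv B φ hφs hφ0 hφ ω₁ ω₂ F hF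
end
end
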